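/- Let G be a context-free grammar over terminal alphabet {0,1} in which every nonterminal is accessible and coaccessible. If the language L(G) generated from the start symbol is well-ordered by the lexicographic order, then for every nonterminal X of G the language L(X) of terminal words derivable from X is also well-ordered by the lexicographic order. -/

import Mathlib

/-- The branching (strict) order on words: `u <ₛ v` iff they have a common
prefix followed by letters `a < b`. -/
def BranchLT {A : Type*} [LinearOrder A] (u v : List A) : Prop :=
  ∃ (w : List A) (a b : A) (u' v' : List A),
    a < b ∧ u = w ++ a :: u' ∧ v = w ++ b :: v'

/-- The proper-prefix order on words. -/
def PrefLT {A : Type*} [LinearOrder A] (u v : List A) : Prop :=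
  u <+: v ∧ u ≠ v

/-- The lexicographic order: proper prefix or branching. -/
def WordLex {A : Type*} [LinearOrder A] (u v : List A) : Prop :=
  PrefLT u v ∨ BranchLT u v

/-- A prefix language: no member is a proper prefix of another member. -/
def IsPrefixLang {A : Type*} [LinearOrder A] (L : Set (List A)) : Prop :=
  ∀ u ∈ L, ∀ v : List A, u ++ v ∈ L → v = []

/-- The lexicographic order restricted to a set of words. -/
def subLex {A : Type*} [LinearOrder A] (L : Set (List A)) : ↥L → ↥L → Prop :=
  fun a b => WordLex a.1 b.1

/-- Elementwise concatenation of two languages. -/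
def LangConcat {A : Type*} (K L : Set (List A)) : Set (List A) :=
  { w | ∃ u ∈ K, ∃ v ∈ L, w = u ++ v }

/-- `n`-fold concatenation power of a language. -/
def LangPow {A : Type*} (L : Set (List A)) : ℕ → Set (List A)
  | 0 => {[]}
  | n + 1 => LangConcat L (LangPow L n)

/-- A context-free grammar over the terminal alphabet `{0,1}` (= `Bool`,
with `false = 0 < 1 = true`), with nonterminals `N`. -/
structure CFG (N : Type) where
  start : N
  prods : N → Set (List (N ⊕ Bool))

/-- One derivation step: replace an occurrence of a nonterminal by the
right-hand side of one of its productions. -/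
def CFG.Step {N : Type} (G : CFG N) (p q : List (N ⊕ Bool)) : Prop :=
  ∃ (l r : List (N ⊕ Bool)) (X : N) (w : List (N ⊕ Bool)),
    p = l ++ Sum.inl X :: r ∧ w ∈ G.prods X ∧ q = l ++ w ++ r

/-- Derivation: the reflexive-transitive closure of `Step`. -/
def CFG.Derives {N : Type} (G : CFG N) : List (N ⊕ Bool) → List (N ⊕ Bool) → Prop :=
  Relation.ReflTransGen G.Step

/-- View a terminal word as a sentential form. -/
def liftWord {N : Type} (u : List Bool) : List (N ⊕ Bool) := u.map Sum.inr

/-- The language of terminal words derivable from a sentential form `q`. -/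
def CFG.lang {N : Type} (G : CFG N) (q : List (N ⊕ Bool)) : Set (List Bool) :=
  { u | G.Derives q (liftWord u) }

/-- The language of a nonterminal. -/
def CFG.langN {N : Type} (G : CFG N) (X : N) : Set (List Bool) :=
  G.lang [Sum.inl X]

/-- A nonterminal is accessible if it occurs in some sentential form
derivable from the start symbol. -/
def CFG.Accessible {N : Type} (G : CFG N) (X : N) : Prop :=
  ∃ q r : List (N ⊕ Bool), G.Derives [Sum.inl G.start] (q ++ Sum.inl X :: r)

/-! The lexicographic order is the union of the proper-prefix order and the branching order
`<ₛ`. Unlike the prefix order, `<ₛ` survives wrapping `u ↦ v ++ u ++ w`, and accessibility of `X`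
together with coaccessibility of all nonterminals provides a context `v, w` with
`v L(X) w ⊆ L(G)`; hence `<ₛ` is well-founded on `L(X)`. Since a word has only finitely many
prefixes, well-foundedness of `<ₛ` already gives that of the lexicographic order. -/

section WordOrder
variable {A : Type*} [LinearOrder A]

theorem wordLex_iff_lt {u v : List A} : WordLex u v ↔ u < v := by
  constructor
  · rintro (⟨⟨_ | ⟨b, t⟩, rfl⟩, hne⟩ | ⟨w, a, b, u', v', hab, rfl, rfl⟩)
    · exact absurd (List.append_nil u).symm hne
    · simpa using List.append_left_lt (l₁ := u) (List.nil_lt_cons b t)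
    · exact List.append_left_lt (List.Lex.rel hab)
  · intro h
    induction h with
    | nil => exact Or.inl ⟨List.nil_prefix, List.cons_ne_nil _ _ ∘ Eq.symm⟩
    | @cons a _ _ _ ih =>
      rcases ih with ⟨hpre, hne⟩ | ⟨w, x, y, u', v', hxy, rfl, rfl⟩
      · exact Or.inl ⟨List.cons_prefix_cons.mpr ⟨rfl, hpre⟩, fun h => hne (List.cons_injective h)⟩
      · exact Or.inr ⟨a :: w, x, y, u', v', hxy, rfl, rfl⟩
    | @rel a l₁ b l₂ hab => exact Or.inr ⟨[], a, b, l₁, l₂, hab, rfl, rfl⟩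

theorem subLex_eq_lt (L : Set (List A)) : subLex L = (· < ·) := by
  funext a b
  exact propext wordLex_iff_lt

theorem isWellOrder_subLex {L : Set (List A)} (h : WellFounded (subLex L)) :
    IsWellOrder L (subLex L) := by
  rw [subLex_eq_lt] at h ⊢
  have : WellFoundedLT L := ⟨h⟩
  infer_instance

theorem BranchLT.append_append {u v : List A} (h : BranchLT u v) (x y : List A) :
    BranchLT (x ++ u ++ y) (x ++ v ++ y) := by
  obtain ⟨w, a, b, u', v', hab, rfl, rfl⟩ := h
  exact ⟨x ++ w, a, b, u' ++ y, v' ++ y, hab, by simp, by simp⟩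

theorem BranchLT.trans_isPrefix {u v w : List A} (h : BranchLT u v) (hvw : v <+: w) :
    BranchLT u w := by
  obtain ⟨p, a, b, u', v', hab, rfl, rfl⟩ := h
  obtain ⟨t, rfl⟩ := hvw
  exact ⟨p, a, b, u', v' ++ t, hab, rfl, by simp⟩

theorem wellFounded_subLex_of_branchLT {L : Set (List A)}
    (h : WellFounded fun a b : L => BranchLT a.1 b.1) : WellFounded (subLex L) := by
  refine ⟨fun u => h.induction u fun u ih => ?_⟩
  suffices ∀ v : L, v.1 <+: u.1 → Acc (subLex L) v from this u List.prefix_rfl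
  intro v
  induction v using (measure fun v : L => v.1.length).wf.induction with
  | _ v ihv =>
    intro hvu
    refine Acc.intro v fun w hwv => ?_
    rcases hwv with ⟨hpre, hne⟩ | hbr
    · have hlen : w.1.length < v.1.length :=
        lt_of_le_of_ne hpre.length_le (fun h => hne (hpre.eq_of_length h))
      exact ihv w hlen (hpre.trans hvu)
    · exact ih w (hbr.trans_isPrefix hvu)

end WordOrder

namespace CFG
variable {N : Type} {G : CFG N}

theorem Step.append_left {p q : List (N ⊕ Bool)} (h : G.Step p q) (x : List (N ⊕ Bool)) :
    G.Step (x ++ p) (x ++ q) := by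
  obtain ⟨l, r, X, w, rfl, hw, rfl⟩ := h
  exact ⟨x ++ l, r, X, w, by simp, hw, by simp⟩

theorem Step.append_right {p q : List (N ⊕ Bool)} (h : G.Step p q) (x : List (N ⊕ Bool)) :
    G.Step (p ++ x) (q ++ x) := by
  obtain ⟨l, r, X, w, rfl, hw, rfl⟩ := h
  exact ⟨l, r ++ x, X, w, by simp, hw, by simp⟩

theorem Derives.append {p p' q q' : List (N ⊕ Bool)} (hp : G.Derives p p')
    (hq : G.Derives q q') : G.Derives (p ++ q) (p' ++ q') :=
  (hp.lift (· ++ q) fun _ _ h => h.append_right q).trans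
    (hq.lift (p' ++ ·) fun _ _ h => h.append_left p')

theorem exists_derives_liftWord (hco : ∀ X : N, (G.langN X).Nonempty) :
    ∀ p : List (N ⊕ Bool), ∃ t : List Bool, G.Derives p (liftWord t)
  | [] => ⟨[], .refl⟩
  | s :: p => by
    obtain ⟨t, ht⟩ := exists_derives_liftWord hco p
    obtain ⟨u, hu⟩ : ∃ u : List Bool, G.Derives [s] (liftWord u) := by
      rcases s with X | b
      exacts [hco X, ⟨[b], .refl⟩]
    exact ⟨u ++ t, by simpa [liftWord] using hu.append ht⟩

theorem exists_append_append_mem_langN_start (hco : ∀ X : N, (G.langN X).Nonempty)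
    {X : N} (hX : G.Accessible X) :
    ∃ v w : List Bool, ∀ u ∈ G.langN X, v ++ u ++ w ∈ G.langN G.start := by
  obtain ⟨q, r, hqr⟩ := hX
  obtain ⟨v, hv⟩ := exists_derives_liftWord hco q
  obtain ⟨w, hw⟩ := exists_derives_liftWord hco r
  refine ⟨v, w, fun u (hu : G.Derives _ _) => hqr.trans ?_⟩
  simpa [liftWord, Derives] using hv.append (hu.append hw)

end CFG

/-- If every nonterminal of `G` is accessible and coaccessible and `L(G)`
is well-ordered by the lexicographic order, then so is `L(X)` for every
nonterminal `X`. -/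
theorem stmt12 {N : Type} (G : CFG N)
    (hacc : ∀ X : N, G.Accessible X)
    (hco : ∀ X : N, (G.langN X).Nonempty)
    (hwo : IsWellOrder ↥(G.langN G.start) (subLex (G.langN G.start))) :
    ∀ X : N, IsWellOrder ↥(G.langN X) (subLex (G.langN X)) := by
  intro X
  obtain ⟨v, w, hvw⟩ := CFG.exists_append_append_mem_langN_start hco (hacc X)
  let wrap : G.langN X → G.langN G.start := fun u => ⟨v ++ u.1 ++ w, hvw u.1 u.2⟩
  have hbranch : WellFounded fun a b : G.langN X => BranchLT a.1 b.1 :=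
    Subrelation.wf (fun h => Or.inr (h.append_append v w)) (InvImage.wf wrap hwo.wf)
  exact isWellOrder_subLex (wellFounded_subLex_of_branchLT hbranch)
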